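/- arXiv:2210.17510 — 2 statements merged into one kernel-verified Lean document; each statement's English description precedes it below -/
import Mathlib

section
/- Graviton propagator Feynman rule: let p ∈ ℝ⁴ with p² ≠ 0 and let ζ ∈ ℝ, ζ ≠ 0, be the gauge parameter. Define the graviton two-point vertex tensor V^{μνρσ} := (1/4)(1 − 1/ζ)(p^μ p^ν η^{ρσ} + p^ρ p^σ η^{μν}) − (1/8)(1 − 1/ζ)(p^μ p^ρ η^{νσ} + p^μ p^σ η^{νρ} + p^ν p^ρ η^{μσ} + p^ν p^σ η^{μρ}) − (1/4)(1 − 1/(2ζ)) p² η^{μν} η^{ρσ} + (1/8) p² (η^{μρ} η^{νσ} + η^{μσ} η^{νρ}), and the graviton propagator tensor A_{μνρσ} := (η_{μρ} η_{νσ} + η_{μσ} η_{νρ} − η_{μν} η_{ρσ}) − ((1−ζ)/p²)(η_{μρ} p_ν p_σ + η_{μσ} p_ν p_ρ + η_{νρ} p_μ p_σ + η_{νσ} p_μ p_ρ). Then A_{μνρσ} V^{ρσκλ} = (p²/4)(δ^κ_μ δ^λ_ν + δ^λ_μ δ^κ_ν), summing over ρ, σ; i.e. the graviton propagator of (effective)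 Quantum General Relativity with linearized de Donder gauge fixing and general gauge parameter ζ is the inverse of the graviton two-point vertex on symmetric index pairs. -/
noncomputable section

/-- Minkowski metric components `η_{μν} = η^{μν} = diag(1, -1, -1, -1)`. -/
def η : Fin 4 → Fin 4 → ℝ := fun μ ν => if μ = ν then (if μ = 0 then 1 else -1) else 0

/-- Kronecker delta. -/
def δ : Fin 4 → Fin 4 → ℝ := fun μ ν => if μ = ν then 1 else 0

/-- Lowered index: `lo p μ = p_μ = η_{μν} p^ν`. -/
def lo (p : Fin 4 → ℝ) (μ : Fin 4) : ℝ := ∑ ν, η μ ν * p ν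

/-- Minkowski inner product `p·q = η_{μν} p^μ q^ν`. -/
def mdot (p q : Fin 4 → ℝ) : ℝ := ∑ μ, ∑ ν, η μ ν * p μ * q ν

/-- Graviton two-point vertex tensor `V^{μνρσ}` with gauge parameter `ζ`. -/
def Vgrav (p : Fin 4 → ℝ) (ζ : ℝ) (μ ν ρ σ : Fin 4) : ℝ :=
  (1 / 4) * (1 - 1 / ζ) * (p μ * p ν * η ρ σ + p ρ * p σ * η μ ν)
    - (1 / 8) * (1 - 1 / ζ) *
        (p μ * p ρ * η ν σ + p μ * p σ * η ν ρ + p ν * p ρ * η μ σ + p ν * p σ * η μ ρ)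
    - (1 / 4) * (1 - 1 / (2 * ζ)) * (mdot p p * η μ ν * η ρ σ)
    + (1 / 8) * (mdot p p * η μ ρ * η ν σ + mdot p p * η μ σ * η ν ρ)

/-- Graviton propagator tensor `A_{μνρσ}` with gauge parameter `ζ`. -/
def Agrav (p : Fin 4 → ℝ) (ζ : ℝ) (μ ν ρ σ : Fin 4) : ℝ :=
  (η μ ρ * η ν σ + η μ σ * η ν ρ - η μ ν * η ρ σ)
    - ((1 - ζ) / mdot p p) *
        (η μ ρ * lo p ν * lo p σ + η μ σ * lo p ν * lo p ρ
          + η ν ρ * lo p μ * lo p σ + η ν σ * lo p μ * lo p ρ)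

lemma eta_comm (a b : Fin 4) : η a b = η b a := by
  unfold η; rcases eq_or_ne a b with rfl | h
  · rfl
  · rw [if_neg h, if_neg (Ne.symm h)]

lemma delta_comm (a b : Fin 4) : δ a b = δ b a := by
  unfold δ; rcases eq_or_ne a b with rfl | h
  · rfl
  · rw [if_neg h, if_neg (Ne.symm h)]

lemma lo0 (p : Fin 4 → ℝ) : lo p 0 = p 0 := by simp [lo, Fin.sum_univ_four, η]
lemma lo1 (p : Fin 4 → ℝ) : lo p 1 = -p 1 := by simp [lo, Fin.sum_univ_four, η]
lemma lo2 (p : Fin 4 → ℝ) : lo p 2 = -p 2 := by simp [lo, Fin.sum_univ_four, η]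
lemma lo3 (p : Fin 4 → ℝ) : lo p 3 = -p 3 := by simp [lo, Fin.sum_univ_four, η]

lemma ηδ0 (b : Fin 4) : η 0 b = δ 0 b := by
  unfold η δ; rcases eq_or_ne (0 : Fin 4) b with rfl | h
  · simp
  · simp [h]
lemma ηδ1 (b : Fin 4) : η 1 b = -δ 1 b := by
  unfold η δ; rcases eq_or_ne (1 : Fin 4) b with rfl | h
  · simp
  · simp [h]
lemma ηδ2 (b : Fin 4) : η 2 b = -δ 2 b := by
  unfold η δ; rcases eq_or_ne (2 : Fin 4) b with rfl | h
  · simp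
  · simp [h]
lemma ηδ3 (b : Fin 4) : η 3 b = -δ 3 b := by
  unfold η δ; rcases eq_or_ne (3 : Fin 4) b with rfl | h
  · simp
  · simp [h]

-- single-sum collapse against diagonal η
lemma S1 (a : Fin 4) (g : Fin 4 → ℝ) : ∑ x, η a x * g x = η a a * g a := by
  fin_cases a <;> simp [η, Fin.sum_univ_four]

-- scalar sum primitives
lemma sLoP (p : Fin 4 → ℝ) : ∑ x, lo p x * p x = mdot p p := by
  simp [lo, mdot, η, Fin.sum_univ_four]
lemma sLoEta (p : Fin 4 → ℝ) (a : Fin 4) : ∑ x, lo p x * η a x = p a := by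
  fin_cases a <;> simp [lo, η, Fin.sum_univ_four]
lemma sLoEta' (p : Fin 4 → ℝ) (b : Fin 4) : ∑ x, lo p x * η x b = p b := by
  fin_cases b <;> simp [lo, η, Fin.sum_univ_four]
lemma sEtaPP (p : Fin 4 → ℝ) : ∑ x, η x x * p x * p x = mdot p p := by
  simp [mdot, η, Fin.sum_univ_four]
lemma sEtaEta : ∑ x : Fin 4, η x x * η x x = 4 := by
  simp [η, Fin.sum_univ_four]; norm_num
lemma sEtaPEta (p : Fin 4 → ℝ) (b : Fin 4) : ∑ x, η x x * p x * η x b = p b := by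
  fin_cases b <;> simp [η, Fin.sum_univ_four]
lemma sEta3 (b c : Fin 4) : ∑ x, η x x * η x b * η x c = η b c := by
  fin_cases b <;> fin_cases c <;> simp [η, Fin.sum_univ_four]

-- double-sum primitives
lemma E1 (a b : Fin 4) (F : Fin 4 → Fin 4 → ℝ) :
    ∑ ρ, ∑ σ, η a ρ * η b σ * F ρ σ = η a a * η b b * F a b := by
  fin_cases a <;> fin_cases b <;> simp [η, Fin.sum_univ_four]
lemma E3 (C : ℝ) (F : Fin 4 → Fin 4 → ℝ) :
    ∑ ρ, ∑ σ, C * (η ρ σ * F ρ σ) = C * ∑ ρ, η ρ ρ * F ρ ρ := by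
  simp [η, Fin.sum_univ_four]; ring
lemma E4 (p : Fin 4 → ℝ) (a : Fin 4) (C : ℝ) (F : Fin 4 → Fin 4 → ℝ) :
    ∑ ρ, ∑ σ, C * (η a ρ * (lo p σ * F ρ σ)) = C * (η a a * ∑ σ, lo p σ * F a σ) := by
  fin_cases a <;> simp [η, Fin.sum_univ_four] <;> ring
lemma E5 (p : Fin 4 → ℝ) (a : Fin 4) (C : ℝ) (F : Fin 4 → Fin 4 → ℝ) :
    ∑ ρ, ∑ σ, C * (lo p ρ * (η a σ * F ρ σ)) = C * (η a a * ∑ ρ, lo p ρ * F ρ a) := by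
  fin_cases a <;> simp [η, Fin.sum_univ_four] <;> ring

lemma d00 : δ 0 0 = 1 := by simp [δ]
lemma d01 : δ 0 1 = 0 := by simp [δ]
lemma d02 : δ 0 2 = 0 := by simp [δ]
lemma d03 : δ 0 3 = 0 := by simp [δ]
lemma d10 : δ 1 0 = 0 := by simp [δ]
lemma d11 : δ 1 1 = 1 := by simp [δ]
lemma d12 : δ 1 2 = 0 := by simp [δ]
lemma d13 : δ 1 3 = 0 := by simp [δ]
lemma d20 : δ 2 0 = 0 := by simp [δ]
lemma d21 : δ 2 1 = 0 := by simp [δ]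
lemma d22 : δ 2 2 = 1 := by simp [δ]
lemma d23 : δ 2 3 = 0 := by simp [δ]
lemma d30 : δ 3 0 = 0 := by simp [δ]
lemma d31 : δ 3 1 = 0 := by simp [δ]
lemma d32 : δ 3 2 = 0 := by simp [δ]
lemma d33 : δ 3 3 = 1 := by simp [δ]

lemma fin4_cases : ∀ b : Fin 4, b = 0 ∨ b = 1 ∨ b = 2 ∨ b = 3 := by decide

section
variable (p : Fin 4 → ℝ) (ζ : ℝ) (κ lam : Fin 4)

lemma Vsym (ρ σ : Fin 4) : Vgrav p ζ ρ σ κ lam = Vgrav p ζ σ ρ κ lam := by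
  simp only [Vgrav]; rw [eta_comm σ ρ]; ring

/-- contraction of the vertex with a lowered momentum on its second slot -/
lemma Vu2 (a : Fin 4) : ∑ σ, lo p σ * Vgrav p ζ a σ κ lam
    = (mdot p p / (8 * ζ)) * (-(p a * η κ lam) + p κ * η a lam + p lam * η a κ) := by
  have h : ∀ σ, lo p σ * Vgrav p ζ a σ κ lam =
      ((1/4) * (1 - 1/ζ) * (p a * η κ lam)
        - (1/8) * (1 - 1/ζ) * (p κ * η a lam + p lam * η a κ)) * (lo p σ * p σ)
      + ((1/4) * (1 - 1/ζ) * (p κ * p lam)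
        - (1/4) * (1 - 1/(2*ζ)) * (mdot p p * η κ lam)) * (lo p σ * η a σ)
      + (-(1/8) * (1 - 1/ζ) * (p a * p κ) + (mdot p p / 8) * η a κ) * (lo p σ * η σ lam)
      + (-(1/8) * (1 - 1/ζ) * (p a * p lam) + (mdot p p / 8) * η a lam) * (lo p σ * η σ κ) :=
    fun σ => by simp only [Vgrav]; ring
  rw [Finset.sum_congr rfl fun σ _ => h σ]
  simp only [Finset.sum_add_distrib, ← Finset.mul_sum]
  rw [sLoP, sLoEta, sLoEta', sLoEta']
  field_simp
  ring

/-- trace of the vertex over its first index pair -/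
lemma TrC : ∑ ρ, η ρ ρ * Vgrav p ζ ρ ρ κ lam
    = (mdot p p * (1/(4*ζ) - 1/2)) * η κ lam + ((1 - 1/ζ)/2) * (p κ * p lam) := by
  have h : ∀ ρ, η ρ ρ * Vgrav p ζ ρ ρ κ lam =
      ((1/4) * (1 - 1/ζ) * η κ lam) * (η ρ ρ * p ρ * p ρ)
      + ((1/4) * (1 - 1/ζ) * (p κ * p lam)
          - (1/4) * (1 - 1/(2*ζ)) * (mdot p p * η κ lam)) * (η ρ ρ * η ρ ρ)
      + (-(1/4) * (1 - 1/ζ) * p κ) * (η ρ ρ * p ρ * η ρ lam)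
      + (-(1/4) * (1 - 1/ζ) * p lam) * (η ρ ρ * p ρ * η ρ κ)
      + (mdot p p / 4) * (η ρ ρ * η ρ κ * η ρ lam) :=
    fun ρ => by simp only [Vgrav]; ring
  rw [Finset.sum_congr rfl fun ρ _ => h ρ]
  simp only [Finset.sum_add_distrib, ← Finset.mul_sum]
  rw [sEtaPP, sEtaEta, sEtaPEta, sEtaPEta, sEta3]
  field_simp
  ring

set_option maxHeartbeats 1600000 in
/-- the vertex with its first index pair lowered -/
lemma VLo (a b : Fin 4) : η a a * η b b * Vgrav p ζ a b κ lam =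
    (1/4) * (1 - 1/ζ) * (lo p a * lo p b * η κ lam + p κ * p lam * η a b)
    - (1/8) * (1 - 1/ζ) * (lo p a * p κ * δ b lam + lo p a * p lam * δ b κ
        + lo p b * p κ * δ a lam + lo p b * p lam * δ a κ)
    - (1/4) * (1 - 1/(2*ζ)) * (mdot p p * η a b * η κ lam)
    + (1/8) * (mdot p p * δ a κ * δ b lam + mdot p p * δ a lam * δ b κ) := by
  rcases fin4_cases a with rfl|rfl|rfl|rfl <;> rcases fin4_cases b with rfl|rfl|rfl|rfl <;>
    simp only [Vgrav, ηδ0, ηδ1, ηδ2, ηδ3, lo0, lo1, lo2, lo3,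
      d00, d01, d02, d03, d10, d11, d12, d13, d20, d21, d22, d23, d30, d31, d32, d33] <;>
    ring

lemma VG (a : Fin 4) : η a a * ∑ σ, lo p σ * Vgrav p ζ a σ κ lam
    = (mdot p p / (8 * ζ)) * (-(lo p a * η κ lam) + p κ * δ a lam + p lam * δ a κ) := by
  rw [Vu2]
  rcases fin4_cases a with rfl|rfl|rfl|rfl <;>
    simp only [ηδ0, ηδ1, ηδ2, ηδ3, lo0, lo1, lo2, lo3,
      d00, d01, d02, d03, d10, d11, d12, d13, d20, d21, d22, d23, d30, d31, d32, d33] <;> ring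

end


/-- The graviton propagator of (effective) Quantum General Relativity with linearized de Donder
gauge fixing and general gauge parameter `ζ` is the inverse of the graviton two-point vertex on
symmetric index pairs: `A_{μνρσ} V^{ρσκλ} = (p²/4)(δ^κ_μ δ^λ_ν + δ^λ_μ δ^κ_ν)`. -/
theorem graviton_propagator_inverts_two_point_vertex (p : Fin 4 → ℝ) (hp : mdot p p ≠ 0)
    (ζ : ℝ) (hζ : ζ ≠ 0) (μ ν κ lam : Fin 4) :
    ∑ ρ, ∑ σ, Agrav p ζ μ ν ρ σ * Vgrav p ζ ρ σ κ lam =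
      (mdot p p / 4) * (δ κ μ * δ lam ν + δ lam μ * δ κ ν) := by
  have key : ∀ ρ σ, Agrav p ζ μ ν ρ σ * Vgrav p ζ ρ σ κ lam =
      η μ ρ * η ν σ * Vgrav p ζ ρ σ κ lam
      + η ν ρ * η μ σ * Vgrav p ζ ρ σ κ lam
      + (-(η μ ν)) * (η ρ σ * Vgrav p ζ ρ σ κ lam)
      + (-((1 - ζ) / mdot p p * lo p ν)) * (η μ ρ * (lo p σ * Vgrav p ζ ρ σ κ lam))
      + (-((1 - ζ) / mdot p p * lo p ν)) * (lo p ρ * (η μ σ * Vgrav p ζ ρ σ κ lam))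
      + (-((1 - ζ) / mdot p p * lo p μ)) * (η ν ρ * (lo p σ * Vgrav p ζ ρ σ κ lam))
      + (-((1 - ζ) / mdot p p * lo p μ)) * (lo p ρ * (η ν σ * Vgrav p ζ ρ σ κ lam)) :=
    fun ρ σ => by simp only [Agrav]; ring
  rw [Finset.sum_congr rfl fun ρ _ => Finset.sum_congr rfl fun σ _ => key ρ σ]
  simp only [Finset.sum_add_distrib]
  rw [E1, E1, E3, E4, E5, E4, E5]
  have swap : ∀ a : Fin 4, (∑ ρ, lo p ρ * Vgrav p ζ ρ a κ lam)
      = ∑ σ, lo p σ * Vgrav p ζ a σ κ lam :=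
    fun a => Finset.sum_congr rfl fun x _ => by rw [Vsym]
  rw [swap μ, swap ν]
  simp only [VG p ζ κ lam]
  rw [TrC p ζ κ lam]
  simp only [VLo p ζ κ lam]
  rw [delta_comm κ μ, delta_comm lam ν, delta_comm lam μ, delta_comm κ ν, eta_comm ν μ]
  field_simp
  ring
end
end

section
/- Vielbein and inverse vielbein as series in the graviton field: let h be a symmetric real 4×4 matrix and κ ∈ ℝ with ‖κ • (η·h)‖ < 1. Then the series E := Σ_{k=0}^∞ C(1/2, k)·κ^k·(η·h)^k and F := Σ_{k=0}^∞ C(−1/2, k)·κ^k·(η·h)^k converge absolutely and satisfy Eᵀ · η · E = η + κ·h (so E is a vielbein for the metric g = η + κh) and E·F = F·E = 1 (so F is the inverse vielbein). -/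
noncomputable section

open Matrix

attribute [local instance] Matrix.linftyOpNormedRing Matrix.linftyOpNormedAlgebra

attribute [local instance] Matrix.linfty_opNormOneClass

/-- The Minkowski metric matrix: the diagonal matrix with diagonal `(1, −1, −1, −1)`. -/
def ηm : Matrix (Fin 4) (Fin 4) ℝ := Matrix.diagonal ![1, -1, -1, -1]

/-- Generalized binomial coefficient `C(x, k) = (∏_{i=0}^{k−1} (x − i)) / k!`. -/
def gchoose (x : ℝ) (k : ℕ) : ℝ :=
  (∏ i ∈ Finset.range k, (x - (i : ℝ))) / (Nat.factorial k : ℝ)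

lemma ηm_mul_ηm : ηm * ηm = 1 := by
  rw [ηm, Matrix.diagonal_mul_diagonal]
  ext i j
  rw [Matrix.diagonal_apply, Matrix.one_apply]
  fin_cases i <;> fin_cases j <;> norm_num

lemma ηm_mul_ηm_assoc (M : Matrix (Fin 4) (Fin 4) ℝ) : ηm * (ηm * M) = M := by
  rw [← mul_assoc, ηm_mul_ηm, one_mul]

lemma ηm_transpose : ηmᵀ = ηm := Matrix.diagonal_transpose _

lemma descPochhammer_smeval_real (x : ℝ) (k : ℕ) :
    Polynomial.smeval (descPochhammer ℤ k) x = ∏ i ∈ Finset.range k, (x - (i : ℝ)) := by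
  induction k with
  | zero => simp [descPochhammer_zero, Polynomial.smeval_one]
  | succ n ih =>
    rw [descPochhammer_succ_right, Polynomial.smeval_mul, ih, Finset.prod_range_succ]
    congr 1
    rw [Polynomial.smeval_sub, Polynomial.smeval_X, Polynomial.smeval_natCast]
    simp

lemma gchoose_eq_choose (x : ℝ) (k : ℕ) : gchoose x k = Ring.choose x k := by
  have h := Ring.descPochhammer_eq_factorial_smul_choose x k
  rw [descPochhammer_smeval_real] at h
  rw [gchoose, h, nsmul_eq_mul]
  field_simp

lemma abs_gchoose_le_one {x : ℝ} (hx : |x| ≤ 1) (k : ℕ) : |gchoose x k| ≤ 1 := by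
  rw [gchoose, abs_div, Nat.abs_cast, div_le_one (by positivity)]
  calc |∏ i ∈ Finset.range k, (x - (i : ℝ))| = ∏ i ∈ Finset.range k, |x - (i : ℝ)| :=
        Finset.abs_prod _ _
    _ ≤ ∏ i ∈ Finset.range k, ((i : ℝ) + 1) := by
        refine Finset.prod_le_prod (fun i _ => abs_nonneg _) (fun i _ => ?_)
        calc |x - (i : ℝ)| ≤ |x| + |(i : ℝ)| := abs_sub _ _
          _ ≤ (i : ℝ) + 1 := by
              rw [Nat.abs_cast]
              linarith
    _ = (k.factorial : ℝ) := by
        rw [← Finset.prod_range_add_one_eq_factorial]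
        push_cast
        rfl

lemma norm_pow_le_mat (A : Matrix (Fin 4) (Fin 4) ℝ) (k : ℕ) : ‖A ^ k‖ ≤ ‖A‖ ^ k := by
  induction k with
  | zero => simp
  | succ n ih =>
    rw [pow_succ, pow_succ]
    exact le_trans (norm_mul_le _ _) (by
      exact mul_le_mul_of_nonneg_right ih (norm_nonneg _) |>.trans_eq rfl)

lemma summable_aux {x : ℝ} (hx : |x| ≤ 1) {A : Matrix (Fin 4) (Fin 4) ℝ} (hA : ‖A‖ < 1) :
    Summable fun k : ℕ => ‖gchoose x k • A ^ k‖ := by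
  refine Summable.of_nonneg_of_le (fun _ => norm_nonneg _) (fun k => ?_)
    (summable_geometric_of_lt_one (norm_nonneg A) hA)
  rw [norm_smul]
  calc ‖gchoose x k‖ * ‖A ^ k‖ ≤ 1 * ‖A‖ ^ k := by
        refine mul_le_mul (by simpa using abs_gchoose_le_one hx k) (norm_pow_le_mat A k)
          (norm_nonneg _) zero_le_one
    _ = ‖A‖ ^ k := one_mul _

lemma tsum_mul_tsum_gchoose {x y : ℝ} (hx : |x| ≤ 1) (hy : |y| ≤ 1)
    {A : Matrix (Fin 4) (Fin 4) ℝ} (hA : ‖A‖ < 1) :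
    (∑' k : ℕ, gchoose x k • A ^ k) * (∑' k : ℕ, gchoose y k • A ^ k)
      = ∑' k : ℕ, gchoose (x + y) k • A ^ k := by
  refine (tsum_mul_tsum_eq_tsum_sum_antidiagonal_of_summable_norm (summable_aux hx hA)
    (summable_aux hy hA)).trans ?_
  congr 1
  funext n
  have hterm : ∀ kl ∈ Finset.HasAntidiagonal.antidiagonal n,
      (gchoose x kl.1 • A ^ kl.1) * (gchoose y kl.2 • A ^ kl.2)
        = (gchoose x kl.1 * gchoose y kl.2) • A ^ n := by
    intro kl hkl
    rw [smul_mul_assoc, mul_smul_comm, smul_smul, ← pow_add,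
      Finset.HasAntidiagonal.mem_antidiagonal.mp hkl]
  rw [Finset.sum_congr rfl hterm, ← Finset.sum_smul]
  congr 1
  simp only [gchoose_eq_choose]
  exact (Ring.add_choose_eq n (Commute.all x y)).symm

lemma gchoose_zero (k : ℕ) : gchoose 0 k = if k = 0 then 1 else 0 := by
  rcases k with _ | n
  · simp [gchoose]
  · simp only [Nat.succ_ne_zero, if_false, gchoose]
    rw [Finset.prod_eq_zero (Finset.mem_range.mpr (Nat.succ_pos n)) (by norm_num), zero_div]

lemma gchoose_one (k : ℕ) : gchoose 1 k = if k ≤ 1 then 1 else 0 := by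
  rcases k with _ | _ | n
  · simp [gchoose]
  · simp [gchoose]
  · rw [if_neg (by omega), gchoose]
    rw [Finset.prod_eq_zero (i := 1) (Finset.mem_range.mpr (by omega)) (by norm_num), zero_div]

lemma tsum_gchoose_zero (A : Matrix (Fin 4) (Fin 4) ℝ) :
    ∑' k : ℕ, gchoose 0 k • A ^ k = 1 := by
  rw [tsum_eq_single 0 (fun b hb => by simp [gchoose_zero, hb])]
  simp [gchoose_zero]

lemma tsum_gchoose_one (A : Matrix (Fin 4) (Fin 4) ℝ) :
    ∑' k : ℕ, gchoose 1 k • A ^ k = 1 + A := by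
  rw [tsum_eq_sum (s := Finset.range 2) (fun b hb => by
    rw [gchoose_one, if_neg (by simpa using hb), zero_smul])]
  rw [Finset.sum_range_succ, Finset.sum_range_one, gchoose_one, gchoose_one]
  norm_num

lemma tsum_transpose {f : ℕ → Matrix (Fin 4) (Fin 4) ℝ} (hf : Summable f) :
    (∑' k, f k)ᵀ = ∑' k, (f k)ᵀ := by
  let T : Matrix (Fin 4) (Fin 4) ℝ →L[ℝ] Matrix (Fin 4) (Fin 4) ℝ :=
    LinearMap.toContinuousLinearMap
      (Matrix.transposeLinearEquiv (Fin 4) (Fin 4) ℝ ℝ).toLinearMap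
  exact T.map_tsum hf

lemma pow_mul_ηm (h : Matrix (Fin 4) (Fin 4) ℝ) (k : ℕ) :
    (h * ηm) ^ k * ηm = ηm * (ηm * h) ^ k := by
  induction k with
  | zero => simp
  | succ n ih =>
    have l1 : (h * ηm) ^ n * (h * ηm) * ηm = (h * ηm) ^ n * h := by
      simp only [mul_assoc, ηm_mul_ηm, mul_one]
    have l2 : ηm * ((ηm * h) ^ n * (ηm * h)) = (h * ηm) ^ n * h := by
      rw [← mul_assoc, ← ih]
      simp only [mul_assoc, ηm_mul_ηm_assoc]
    rw [pow_succ, pow_succ, l1, l2]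

/-- Vielbein and inverse vielbein as series in the graviton field: if `h` is symmetric and
`‖κ • ηh‖ < 1` (L∞ operator norm), then `E = Σ_k C(1/2,k) κ^k (ηh)^k` and
`F = Σ_k C(−1/2,k) κ^k (ηh)^k` converge absolutely, `Eᵀ η E = η + κh`, and `F` is a two-sided
inverse of `E`. -/
theorem vielbein_series (h : Matrix (Fin 4) (Fin 4) ℝ) (hsymm : h.IsSymm) (κ : ℝ)
    (hn : ‖κ • (ηm * h)‖ < 1) :
    Summable (fun k : ℕ => ‖(gchoose (1 / 2) k * κ ^ k) • (ηm * h) ^ k‖) ∧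
    Summable (fun k : ℕ => ‖(gchoose (-(1 / 2)) k * κ ^ k) • (ηm * h) ^ k‖) ∧
    (∑' k : ℕ, (gchoose (1 / 2) k * κ ^ k) • (ηm * h) ^ k)ᵀ * ηm *
        (∑' k : ℕ, (gchoose (1 / 2) k * κ ^ k) • (ηm * h) ^ k) = ηm + κ • h ∧
    (∑' k : ℕ, (gchoose (1 / 2) k * κ ^ k) • (ηm * h) ^ k) *
        (∑' k : ℕ, (gchoose (-(1 / 2)) k * κ ^ k) • (ηm * h) ^ k) = 1 ∧
    (∑' k : ℕ, (gchoose (-(1 / 2)) k * κ ^ k) • (ηm * h) ^ k) *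
        (∑' k : ℕ, (gchoose (1 / 2) k * κ ^ k) • (ηm * h) ^ k) = 1 := by
  have hrw : ∀ (x : ℝ) (k : ℕ),
      (gchoose x k * κ ^ k) • (ηm * h) ^ k = gchoose x k • (κ • (ηm * h)) ^ k := by
    intro x k
    rw [smul_pow, mul_smul]
  simp only [hrw]
  set A := κ • (ηm * h) with hAdef
  have h1 : |(1 / 2 : ℝ)| ≤ 1 := by norm_num [abs_le]
  have h2 : |(-(1 / 2) : ℝ)| ≤ 1 := by norm_num [abs_le]
  have S1 := summable_aux h1 hn
  have S2 := summable_aux h2 hn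
  have hEF : (∑' k : ℕ, gchoose (1 / 2) k • A ^ k) *
      (∑' k : ℕ, gchoose (-(1 / 2)) k • A ^ k) = 1 := by
    rw [tsum_mul_tsum_gchoose h1 h2 hn]
    norm_num [tsum_gchoose_zero]
  have hFE : (∑' k : ℕ, gchoose (-(1 / 2)) k • A ^ k) *
      (∑' k : ℕ, gchoose (1 / 2) k • A ^ k) = 1 := by
    rw [tsum_mul_tsum_gchoose h2 h1 hn]
    norm_num [tsum_gchoose_zero]
  refine ⟨S1, S2, ?_, hEF, hFE⟩
  -- the vielbein property
  have hEE : (∑' k : ℕ, gchoose (1 / 2) k • A ^ k) *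
      (∑' k : ℕ, gchoose (1 / 2) k • A ^ k) = 1 + A := by
    rw [tsum_mul_tsum_gchoose h1 h1 hn]
    norm_num [tsum_gchoose_one]
  have hAT : Aᵀ = κ • (h * ηm) := by
    rw [hAdef, Matrix.transpose_smul, Matrix.transpose_mul, ηm_transpose, hsymm]
  have hT : (∑' k : ℕ, gchoose (1 / 2) k • A ^ k)ᵀ
      = ∑' k : ℕ, gchoose (1 / 2) k • (κ • (h * ηm)) ^ k := by
    rw [tsum_transpose S1.of_norm]
    congr 1
    funext k
    rw [Matrix.transpose_smul, Matrix.transpose_pow, hAT]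
  have hterm : ∀ k : ℕ, (gchoose (1 / 2) k • (κ • (h * ηm)) ^ k) * ηm
      = ηm * (gchoose (1 / 2) k • A ^ k) := by
    intro k
    rw [smul_mul_assoc, mul_smul_comm]
    congr 1
    rw [hAdef, smul_pow, smul_pow, smul_mul_assoc, mul_smul_comm]
    congr 1
    exact pow_mul_ηm h k
  have hsummT : Summable (fun k : ℕ => gchoose (1 / 2) k • (κ • (h * ηm)) ^ k) := by
    have : (fun k : ℕ => gchoose (1 / 2) k • (κ • (h * ηm)) ^ k)
        = (fun M : Matrix (Fin 4) (Fin 4) ℝ => Mᵀ) ∘ (fun k => gchoose (1 / 2) k • A ^ k) := by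
      funext k
      simp only [Function.comp_apply, Matrix.transpose_smul, Matrix.transpose_pow, hAT]
    rw [this]
    exact (S1.of_norm).map
      (LinearMap.toContinuousLinearMap
        (Matrix.transposeLinearEquiv (Fin 4) (Fin 4) ℝ ℝ).toLinearMap : _ →L[ℝ] _)
      (by fun_prop)
  calc (∑' k : ℕ, gchoose (1 / 2) k • A ^ k)ᵀ * ηm * (∑' k : ℕ, gchoose (1 / 2) k • A ^ k)
      = (∑' k : ℕ, (gchoose (1 / 2) k • (κ • (h * ηm)) ^ k) * ηm) *
        (∑' k : ℕ, gchoose (1 / 2) k • A ^ k) := by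
        rw [hT, hsummT.tsum_mul_right]
    _ = (∑' k : ℕ, ηm * (gchoose (1 / 2) k • A ^ k)) *
        (∑' k : ℕ, gchoose (1 / 2) k • A ^ k) := by
        rw [tsum_congr hterm]
    _ = (ηm * ∑' k : ℕ, gchoose (1 / 2) k • A ^ k) *
        (∑' k : ℕ, gchoose (1 / 2) k • A ^ k) := by
        exact congrArg (· * _) ((S1.of_norm).tsum_mul_left ηm)
    _ = ηm * (1 + A) := by rw [mul_assoc, hEE]
    _ = ηm + κ • h := by
        rw [mul_add, mul_one, hAdef, mul_smul_comm, ηm_mul_ηm_assoc]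
end
end
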